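/- If Q is a TM-ideal of a locally geometric poset P with rk(Q) = rk(P) − 1, then for any atom a ∈ A(P)∖A(Q) there is a poset isomorphism Q ≃ P_{≥a}, given by x ↦ x ∨ a. -/

import Mathlib

open scoped Classical
open Polynomial

noncomputable section

namespace PosetArr

/-- The rank of an element of a poset: the length of the longest chain
strictly below it. In a ranked poset this is the common length of all maximal
chains with greatest element `x`. -/
noncomputable def rk {α : Type*} [Preorder α] (x : α) : ℕ :=
  (Set.chainHeight (Set.Iio x) (· < ·)).toNat

/-- The rank of a (finite) poset: the maximal rank of an element. -/
noncomputable def prk (α : Type*) [Preorder α] [Fintype α] : ℕ :=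
  Finset.univ.sup (rk (α := α))

/-- A finite poset is ranked iff covering relations increase `rk` by one;
equivalently, for every `x` all maximal chains with greatest element `x`
have the same length. -/
def IsRanked (α : Type*) [Preorder α] : Prop :=
  ∀ x y : α, x ⋖ y → rk y = rk x + 1

/-- The set of atoms (elements of rank 1) of a poset. -/
def atoms (α : Type*) [Preorder α] : Set α := {x : α | rk x = 1}

/-- `joinSet T` is the join `⋁ T`: the set of minimal upper bounds of `T`. -/
def joinSet {α : Type*} [PartialOrder α] (T : Set α) : Set α :=
  {z | z ∈ upperBounds T ∧ ∀ w ∈ upperBounds T, w ≤ z → w = z}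

/-- `meetSet T` is the meet `⋀ T`: the set of maximal lower bounds of `T`. -/
def meetSet {α : Type*} [PartialOrder α] (T : Set α) : Set α :=
  {z | z ∈ lowerBounds T ∧ ∀ w ∈ lowerBounds T, z ≤ w → w = z}

/-- A poset is a lattice if any two elements have a unique minimal upper
bound and a unique maximal lower bound. -/
def IsLatticePoset (α : Type*) [PartialOrder α] : Prop :=
  ∀ x y : α, (∃! z, z ∈ joinSet {x, y}) ∧ (∃! z, z ∈ meetSet {x, y})

/-- A (finite) lattice is geometric if for all `x, y`: `y` covers `x` iff
there is an atom `a` with `a ≰ x` and `y = x ∨ a`. -/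
def IsGeomLattice (α : Type*) [PartialOrder α] : Prop :=
  IsLatticePoset α ∧
    ∀ x y : α, x ⋖ y ↔ ∃ a : α, a ∈ atoms α ∧ ¬a ≤ x ∧ y ∈ joinSet {x, a}

/-- A finite ranked poset is locally geometric if every lower interval
`P_{≤ x}` is a geometric lattice. -/
def IsLocallyGeometric (α : Type*) [PartialOrder α] : Prop :=
  IsRanked α ∧ ∀ x : α, IsGeomLattice {y : α // y ≤ x}

/-- The Möbius function of a finite poset. -/
noncomputable def mob {α : Type*} [PartialOrder α] [Fintype α] (a b : α) : ℤ :=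
  if a = b then 1
  else if a < b then
    - ∑ c ∈ (Finset.univ.filter (fun c : α => a ≤ c ∧ c < b)).attach, mob a c.1
  else 0
termination_by (Finset.univ.filter (fun c : α => c ≤ b)).card
decreasing_by
  have hc := c.2
  simp only [Finset.mem_filter, Finset.mem_univ, true_and] at hc
  apply Finset.card_lt_card
  constructor
  · intro z hz
    simp only [Finset.mem_filter, Finset.mem_univ, true_and] at hz ⊢
    exact hz.trans hc.2.le
  · intro hsub
    have hb : b ∈ Finset.univ.filter (fun z : α => z ≤ b) := by
      simp
    have := hsub hb
    simp only [Finset.mem_filter, Finset.mem_univ, true_and] at this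
    exact absurd (lt_of_le_of_lt this hc.2) (lt_irrefl _)

/-- The characteristic polynomial of a finite ranked poset with `0̂`:
`χ_P(t) = ∑_x μ(0̂,x) t^(rk(P) - rk(x))`. -/
noncomputable def charPoly (α : Type*) [PartialOrder α] [Fintype α] [OrderBot α] :
    Polynomial ℤ :=
  ∑ x : α, Polynomial.C (mob ⊥ x) * Polynomial.X ^ (prk α - rk x)

/-- The subposet of `P` generated by a set `B` of atoms: the minimal element
together with all joins of subsets of `B`. -/
def genSub {α : Type*} [PartialOrder α] [OrderBot α] (B : Set α) : Set α :=
  insert ⊥ {z | ∃ T ⊆ B, z ∈ joinSet T}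

instance upperOrderBot {α : Type*} [PartialOrder α] (a : α) :
    OrderBot {y : α // a ≤ y} where
  bot := ⟨a, le_rfl⟩
  bot_le y := y.2

instance genSubOrderBot {α : Type*} [PartialOrder α] [OrderBot α] (B : Set α) :
    OrderBot {y : α // y ∈ genSub B} where
  bot := ⟨⊥, Set.mem_insert _ _⟩
  bot_le y := bot_le

/-- `OrderBot` structure on a down-set containing `⊥`. -/
def subsetOrderBot {α : Type*} [PartialOrder α] [OrderBot α] {Q : Set α}
    (h : ⊥ ∈ Q) : OrderBot {y : α // y ∈ Q} where
  bot := ⟨⊥, h⟩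
  bot_le y := bot_le

/-- The class of inductive posets: the smallest class of locally geometric
posets containing the one-element poset and closed under the addition step:
`P ∈ IP` whenever there is an atom `a` such that `P'' = P_{≥a} ∈ IP`,
`P' = P(A(P) \ {a}) ∈ IP` and `χ_{P''} ∣ χ_{P'}`. -/
inductive IsInductivePoset :
    ∀ (β : Type) (po : PartialOrder β) (fin : Fintype β) (bo : OrderBot β), Prop where
  | triv (β : Type) [po : PartialOrder β] [fin : Fintype β] [bo : OrderBot β]
      (h : ∀ x : β, x = ⊥) : IsInductivePoset β po fin bo
  | step (β : Type) [po : PartialOrder β] [fin : Fintype β] [bo : OrderBot β]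
      (hLG : IsLocallyGeometric β) (a : β) (ha : a ∈ atoms β)
      (hres : IsInductivePoset {y : β // a ≤ y} inferInstance inferInstance inferInstance)
      (hdel : IsInductivePoset {y : β // y ∈ genSub (atoms β \ {a})}
        inferInstance inferInstance inferInstance)
      (hdvd : charPoly {y : β // a ≤ y} ∣ charPoly {y : β // y ∈ genSub (atoms β \ {a})}) :
      IsInductivePoset β po fin bo

/-- The class of divisional posets: the smallest class of locally geometric
posets containing the one-element poset and closed under:
`P ∈ DP` whenever there is an atom `a` such that `P'' = P_{≥a} ∈ DP`
and `χ_{P''} ∣ χ_P`. -/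
inductive IsDivisionalPoset :
    ∀ (β : Type) (po : PartialOrder β) (fin : Fintype β) (bo : OrderBot β), Prop where
  | triv (β : Type) [po : PartialOrder β] [fin : Fintype β] [bo : OrderBot β]
      (h : ∀ x : β, x = ⊥) : IsDivisionalPoset β po fin bo
  | step (β : Type) [po : PartialOrder β] [fin : Fintype β] [bo : OrderBot β]
      (hLG : IsLocallyGeometric β) (a : β) (ha : a ∈ atoms β)
      (hres : IsDivisionalPoset {y : β // a ≤ y} inferInstance inferInstance inferInstance)
      (hdvd : charPoly {y : β // a ≤ y} ∣ charPoly β) :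
      IsDivisionalPoset β po fin bo

/-- An element `m` of a (geometric) lattice is modular if
`m ∧ (y ∨ z) = (m ∧ y) ∨ z` for all `z ≤ m` and all `y`. Joins and meets are
expressed via `joinSet` and `meetSet`. -/
def IsModular {β : Type*} [PartialOrder β] (m : β) : Prop :=
  ∀ z y j mj my r : β, z ≤ m →
    j ∈ joinSet {y, z} → mj ∈ meetSet {m, j} →
    my ∈ meetSet {m, y} → r ∈ joinSet {my, z} → mj = r

/-- `Q` is an M-ideal of the locally geometric poset `β`. -/
def IsMIdeal (β : Type*) [PartialOrder β] (Q : Set β) : Prop :=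
  IsLowerSet Q ∧
  (∀ x y : β, Maximal (· ∈ Q) x → Maximal (· ∈ Q) y → rk x = rk y) ∧
  (∀ T ⊆ Q, joinSet T ⊆ Q) ∧
  (∀ y ∈ Q, ∀ a ∈ atoms β, a ∉ Q → (joinSet {a, y}).Nonempty) ∧
  (∀ x : β, IsMax x → ∃ y, Maximal (· ∈ Q) y ∧
    ∃ h : y ≤ x, IsModular (⟨y, h⟩ : {u : β // u ≤ x}))

/-- `Q` is a TM-ideal of the locally geometric poset `β`: an M-ideal where
moreover `|a ∨ y| = 1` for `y ∈ Q` and atoms `a ∉ Q`. -/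
def IsTMIdeal (β : Type*) [PartialOrder β] (Q : Set β) : Prop :=
  IsMIdeal β Q ∧ ∀ y ∈ Q, ∀ a ∈ atoms β, a ∉ Q → ∃! z, z ∈ joinSet {a, y}

/-- A locally geometric poset is supersolvable if it admits an M-chain
`{0̂} = Q_0 ⊊ Q_1 ⊊ ⋯ ⊊ Q_r = P` with each `Q_i` an M-ideal of `Q_{i+1}`
and `rk(Q_i) = i`. -/
def IsSupersolvable (β : Type*) [PartialOrder β] [Fintype β] [OrderBot β] : Prop :=
  ∃ Q : Fin (prk β + 1) → Set β,
    Q 0 = {⊥} ∧ Q (Fin.last _) = Set.univ ∧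
    (∀ i : Fin (prk β), Q i.castSucc ⊂ Q i.succ) ∧
    (∀ i : Fin (prk β + 1), prk {y : β // y ∈ Q i} = i) ∧
    ∀ i : Fin (prk β),
      IsMIdeal {y : β // y ∈ Q i.succ} {z : {y : β // y ∈ Q i.succ} | (z : β) ∈ Q i.castSucc}

/-- A locally geometric poset is strictly supersolvable if it admits a
TM-chain as above, with each `Q_i` a TM-ideal of `Q_{i+1}`. -/
def IsStrictlySupersolvable (β : Type*) [PartialOrder β] [Fintype β] [OrderBot β] : Prop :=
  ∃ Q : Fin (prk β + 1) → Set β,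
    Q 0 = {⊥} ∧ Q (Fin.last _) = Set.univ ∧
    (∀ i : Fin (prk β), Q i.castSucc ⊂ Q i.succ) ∧
    (∀ i : Fin (prk β + 1), prk {y : β // y ∈ Q i} = i) ∧
    ∀ i : Fin (prk β),
      IsTMIdeal {y : β // y ∈ Q i.succ} {z : {y : β // y ∈ Q i.succ} | (z : β) ∈ Q i.castSucc}

end PosetArr


/-!
Joining with an atom `a ∉ Q` raises the rank by exactly one, because in the geometric lattice
`P_{≤ x ∨ a}` the element `x ∨ a` covers `x`. This makes `x ↦ x ∨ a` order-reflecting: if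
`x ∨ a ≤ x' ∨ a`, then `w ∈ x ∨ x'` lies in `Q` and `w ∨ a ≤ x' ∨ a` forces `rk w ≤ rk x'`,
so `w = x'` and `x ≤ x'`.

For surjectivity let `z ≥ a`, choose a maximal `x₀ ≥ z` and a modular `y ∈ max Q` below `x₀`.
By the rank hypothesis `y` is a coatom of `P_{≤ x₀}`. Put `x = y ∧ z`; if `x ∨ a < z`, some atom
`b ≤ z` avoids `x ∨ a`, and the exchange property combined with the modular law at `y` shows that
this is impossible.
-/

namespace PosetArr

section Subtype

variable {α : Type*} [PartialOrder α] {p : α → Prop} (hp : IsLowerSet {u | p u})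
include hp

lemma rk_val (x : {u // p u}) : rk (x : α) = rk x := by
  have himg : (OrderEmbedding.subtype p).ltEmbedding '' Set.Iio x = Set.Iio (x : α) := by
    ext u
    exact ⟨by rintro ⟨v, hv, rfl⟩; exact hv, fun hu => ⟨⟨u, hp hu.le x.2⟩, hu, rfl⟩⟩
  unfold rk
  rw [← himg, Set.chainHeight_eq_of_relEmbedding]

lemma val_covBy_val_iff {x y : {u // p u}} : (x : α) ⋖ y ↔ x ⋖ y :=
  Set.OrdConnected.apply_covBy_apply_iff (OrderEmbedding.subtype p) <| by
    simpa only [OrderEmbedding.coe_subtype, Subtype.range_coe_subtype] using hp.ordConnected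

lemma val_mem_joinSet_iff {S : Set {u // p u}} {m : {u // p u}} :
    (m : α) ∈ joinSet (Subtype.val '' S) ↔ m ∈ joinSet S := by
  have hub : ∀ w : {u // p u}, (w : α) ∈ upperBounds (Subtype.val '' S) ↔ w ∈ upperBounds S :=
    fun w => by
      simp only [mem_upperBounds, Set.forall_mem_image, Subtype.coe_le_coe]
  refine ⟨fun ⟨hm, hmin⟩ => ⟨(hub m).1 hm, fun w hw hwm => Subtype.ext (hmin w ((hub w).2 hw) hwm)⟩,
    fun ⟨hm, hmin⟩ => ⟨(hub m).2 hm, fun w hw hwm => ?_⟩⟩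
  have hwp : p w := hp hwm m.2
  exact congrArg Subtype.val (hmin ⟨w, hwp⟩ ((hub ⟨w, hwp⟩).1 hw) hwm)

end Subtype

section Finite

variable {α : Type*} [PartialOrder α]

lemma mem_upperBounds_pair {x y w : α} : w ∈ upperBounds {x, y} ↔ x ≤ w ∧ y ≤ w := by
  simp only [mem_upperBounds, Set.mem_insert_iff, Set.mem_singleton_iff, forall_eq_or_imp,
    forall_eq]

lemma mem_lowerBounds_pair {x y w : α} : w ∈ lowerBounds {x, y} ↔ w ≤ x ∧ w ≤ y := by
  simp only [mem_lowerBounds, Set.mem_insert_iff, Set.mem_singleton_iff, forall_eq_or_imp,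
    forall_eq]

variable [Finite α]

lemma rk_strictMono : StrictMono (rk : α → ℕ) := by
  intro x y hxy
  have hfin : ∀ s : Set α, s.chainHeight (· < ·) ≠ ⊤ :=
    fun s => Set.chainHeight_ne_top_of_finite s _ s.toFinite
  obtain ⟨t, hts, hte, htc⟩ :=
    Set.exists_eq_chainHeight_of_finite (Set.Iio x) (· < ·) (Set.toFinite _)
  have hxt : x ∉ t := fun hx => lt_irrefl x (hts hx)
  -- a longest chain below `x`, extended by `x`, is a chain below `y`
  have hchain : (Set.Iio x).chainHeight (· < ·) + 1 ≤ (Set.Iio y).chainHeight (· < ·) := by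
    rw [← hte, ← Set.encard_insert_of_notMem hxt]
    refine Set.encard_le_chainHeight_of_isChain _ _ ?_ (htc.insert fun b hb _ => Or.inr (hts hb))
    exact Set.insert_subset hxy fun u hu => (hts hu).trans hxy
  have := ENat.toNat_le_toNat hchain (hfin _)
  rwa [ENat.toNat_add (hfin _) ENat.one_ne_top, ENat.toNat_one] at this

lemma exists_mem_joinSet_le {S : Set α} {w : α} (hw : w ∈ upperBounds S) :
    ∃ m ∈ joinSet S, m ≤ w := by
  obtain ⟨m, hmw, hm⟩ :=
    Finite.exists_le_minimal (p := fun u => u ∈ upperBounds S ∧ u ≤ w) ⟨hw, le_rfl⟩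
  exact ⟨m, ⟨hm.1.1, fun u hu hum => le_antisymm hum (hm.2 ⟨hu, hum.trans hmw⟩ hum)⟩, hmw⟩

lemma exists_le_mem_meetSet {S : Set α} {w : α} (hw : w ∈ lowerBounds S) :
    ∃ m ∈ meetSet S, w ≤ m := by
  obtain ⟨m, hwm, hm⟩ :=
    Finite.exists_le_maximal (p := fun u => u ∈ lowerBounds S ∧ w ≤ u) ⟨hw, le_rfl⟩
  exact ⟨m, ⟨hm.1.1, fun u hu hmu => le_antisymm (hm.2 ⟨hu, hwm.trans hmu⟩ hmu) hmu⟩, hwm⟩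

lemma le_of_mem_joinSet_of_unique {S : Set α} {z w : α} (hS : ∃! z, z ∈ joinSet S)
    (hz : z ∈ joinSet S) (hw : w ∈ upperBounds S) : z ≤ w := by
  obtain ⟨m, hm, hmw⟩ := exists_mem_joinSet_le hw
  exact hS.unique hz hm ▸ hmw

lemma le_of_mem_meetSet_of_unique {S : Set α} {z w : α} (hS : ∃! z, z ∈ meetSet S)
    (hz : z ∈ meetSet S) (hw : w ∈ lowerBounds S) : w ≤ z := by
  obtain ⟨m, hm, hwm⟩ := exists_le_mem_meetSet hw
  exact hS.unique hz hm ▸ hwm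

lemma covBy_of_rk_le {x y : α} (hxy : x < y) (hrk : rk y ≤ rk x + 1) : x ⋖ y :=
  ⟨hxy, fun _ hxc hcy => by
    have := rk_strictMono hxc
    have := rk_strictMono hcy
    omega⟩

abbrev IsLatticePoset.toLattice (h : IsLatticePoset α) : Lattice α where
  sup x y := (h x y).1.choose
  le_sup_left x y := (h x y).1.choose_spec.1.1 (by simp)
  le_sup_right x y := (h x y).1.choose_spec.1.1 (by simp)
  sup_le x y w hx hy :=
    le_of_mem_joinSet_of_unique (h x y).1 (h x y).1.choose_spec.1 (mem_upperBounds_pair.2 ⟨hx, hy⟩)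
  inf x y := (h x y).2.choose
  inf_le_left x y := (h x y).2.choose_spec.1.1 (by simp)
  inf_le_right x y := (h x y).2.choose_spec.1.1 (by simp)
  le_inf w x y hx hy :=
    le_of_mem_meetSet_of_unique (h x y).2 (h x y).2.choose_spec.1 (mem_lowerBounds_pair.2 ⟨hx, hy⟩)

end Finite

section Lattice

variable {β : Type*} [Lattice β]

lemma mem_joinSet_pair_iff {x y z : β} : z ∈ joinSet {x, y} ↔ z = x ⊔ y :=
  ⟨fun ⟨hub, hmin⟩ => (hmin _ isLUB_pair.1 (isLUB_pair.2 hub)).symm,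
    fun h => h ▸ ⟨isLUB_pair.1, fun _ hw hwz => le_antisymm hwz (isLUB_pair.2 hw)⟩⟩

lemma mem_meetSet_pair_iff {x y z : β} : z ∈ meetSet {x, y} ↔ z = x ⊓ y :=
  ⟨fun ⟨hlb, hmax⟩ => (hmax _ isGLB_pair.1 (isGLB_pair.2 hlb)).symm,
    fun h => h ▸ ⟨isGLB_pair.1, fun _ hw hzw => le_antisymm (isGLB_pair.2 hw) hzw⟩⟩

lemma IsModular.inf_sup_eq {m z : β} (hm : IsModular m) (hz : z ≤ m) (y : β) :
    m ⊓ (y ⊔ z) = m ⊓ y ⊔ z :=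
  hm z y _ _ _ _ hz (mem_joinSet_pair_iff.2 rfl) (mem_meetSet_pair_iff.2 rfl)
    (mem_meetSet_pair_iff.2 rfl) (mem_joinSet_pair_iff.2 rfl)

lemma IsGeomLattice.covBy_iff (hG : IsGeomLattice β) {x y : β} :
    x ⋖ y ↔ ∃ b ∈ atoms β, ¬b ≤ x ∧ y = x ⊔ b := by
  simp only [hG.2, mem_joinSet_pair_iff]

lemma IsGeomLattice.le_sup_of_le_sup (hG : IsGeomLattice β) {w b t : β} (hb : b ∈ atoms β)
    (ht : t ∈ atoms β) (hbw : ¬b ≤ w) (htw : ¬t ≤ w) (hbt : b ≤ w ⊔ t) : t ≤ w ⊔ b := by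
  have hwt : w ⋖ w ⊔ t := hG.covBy_iff.2 ⟨t, ht, htw, rfl⟩
  have hwb : w ⋖ w ⊔ b := hG.covBy_iff.2 ⟨b, hb, hbw, rfl⟩
  have hbt' : w ⊔ b = w ⊔ t :=
    (hwt.eq_or_eq hwb.le (sup_le le_sup_left hbt)).resolve_left hwb.lt.ne'
  exact hbt' ▸ le_sup_right

lemma IsGeomLattice.le_of_le_sup_of_isModular [Finite β] (hG : IsGeomLattice β) {y J Z B : β}
    (hy : IsModular y) (hB : B ∈ atoms β) (hBZ : B ≤ Z) (hBJy : B ≤ J ⊔ y) (hJZ : J ≤ Z)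
    (hyZ : y ⊓ Z ≤ J) : B ≤ J := by
  by_contra hBJ
  -- Peel an atom `t` off a minimal `c ≤ y` with `B ≤ J ⊔ c`: exchange puts `t` below
  -- `Z ⊔ c'`, and the modular law at `y` then puts it below `J ⊔ c'`, against minimality.
  obtain ⟨c, -, hc⟩ :=
    Finite.exists_le_minimal (p := fun c => c ≤ y ∧ B ≤ J ⊔ c) ⟨le_rfl, hBJy⟩
  have hcJ : ¬c ≤ J := fun h => hBJ (sup_eq_left.2 h ▸ hc.1.2)
  obtain ⟨c', -, hc'c⟩ := exists_le_covBy_of_lt (inf_lt_left.2 hcJ)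
  obtain ⟨t, ht, htc', rfl⟩ := hG.covBy_iff.1 hc'c
  have hc'y : c' ≤ y := le_sup_left.trans hc.1.1
  have hBW : ¬B ≤ J ⊔ c' := fun h => hc.not_prop_of_lt hc'c.lt ⟨hc'y, h⟩
  have hBWt : B ≤ J ⊔ c' ⊔ t := sup_assoc J c' t ▸ hc.1.2
  have htW : ¬t ≤ J ⊔ c' := fun h => hBW (sup_eq_left.2 h ▸ hBWt)
  have htWB : t ≤ J ⊔ c' ⊔ B := hG.le_sup_of_le_sup hB ht hBW htW hBWt
  have htyZ : t ≤ y ⊓ (Z ⊔ c') :=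
    le_inf (le_sup_right.trans hc.1.1)
      (htWB.trans (sup_le (sup_le_sup_right hJZ c') (hBZ.trans le_sup_left)))
  rw [hy.inf_sup_eq hc'y Z] at htyZ
  exact htW (htyZ.trans (sup_le_sup_right hyZ c'))

lemma IsGeomLattice.eq_of_isModular_of_isCoatom [OrderTop β] [Finite β] (hG : IsGeomLattice β)
    {y J Z : β} (hy : IsModular y) (hyc : IsCoatom y) (hJZ : J ≤ Z) (hyZ : y ⊓ Z ≤ J)
    (hJy : ¬J ≤ y) : J = Z := by
  by_contra hne
  obtain ⟨U, hJU, hUZ⟩ := exists_le_covBy_of_lt (lt_of_le_of_ne hJZ hne)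
  obtain ⟨B, hB, hBU, rfl⟩ := hG.covBy_iff.1 hUZ
  have hJy_top : J ⊔ y = ⊤ := hyc.2 _ (right_lt_sup.2 hJy)
  exact hBU ((hG.le_of_le_sup_of_isModular hy hB le_sup_right (hJy_top ▸ le_top) hJZ hyZ).trans hJU)

end Lattice

section LocallyGeometric

variable {α : Type*} [PartialOrder α]

lemma IsLocallyGeometric.covBy_of_mem_joinSet (hLG : IsLocallyGeometric α) {a x z : α}
    (ha : a ∈ atoms α) (hax : ¬a ≤ x) (hz : z ∈ joinSet {a, x}) : x ⋖ z := by
  have hp : IsLowerSet {u : α | u ≤ z} := isLowerSet_Iic z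
  have hA : (⟨a, hz.1 (by simp)⟩ : {u // u ≤ z}) ∈ atoms {u // u ≤ z} :=
    (rk_val hp _).symm.trans ha
  have hZ : (⟨z, le_rfl⟩ : {u // u ≤ z}) ∈ joinSet {⟨x, hz.1 (by simp)⟩, ⟨a, hz.1 (by simp)⟩} := by
    rw [← val_mem_joinSet_iff hp, Set.image_pair, Set.pair_comm]
    exact hz
  exact (val_covBy_val_iff hp).2 (((hLG.2 z).2 _ _).2 ⟨_, hA, hax, hZ⟩)

variable [Finite α] {Q : Set α} {a : α}

lemma IsTMIdeal.le_of_joinSet_le (hLG : IsLocallyGeometric α) (hQ : IsTMIdeal α Q)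
    (ha : a ∈ atoms α) (haQ : a ∉ Q) {x x' z z' : α} (hx : x ∈ Q) (hx' : x' ∈ Q)
    (hz : z ∈ joinSet {a, x}) (hz' : z' ∈ joinSet {a, x'}) (hzz' : z ≤ z') : x ≤ x' := by
  obtain ⟨⟨hlow, -, hjoin, -, -⟩, hunique⟩ := hQ
  have hnle : ∀ u ∈ Q, ¬a ≤ u := fun u hu h => haQ (hlow h hu)
  have haz' : a ≤ z' := hz'.1 (by simp)
  have hxz' : x ≤ z' := (hz.1 (by simp)).trans hzz'
  have hx'z' : x' ≤ z' := hz'.1 (by simp)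
  obtain ⟨w, hw, hwz'⟩ := exists_mem_joinSet_le (mem_upperBounds_pair.2 ⟨hxz', hx'z'⟩)
  have hwQ : w ∈ Q := hjoin _ (Set.insert_subset hx (Set.singleton_subset_iff.2 hx')) hw
  obtain ⟨v, hv⟩ := (hunique w hwQ a ha haQ).exists
  have hvz' : v ≤ z' :=
    le_of_mem_joinSet_of_unique (hunique w hwQ a ha haQ) hv (mem_upperBounds_pair.2 ⟨haz', hwz'⟩)
  have hrk_v := hLG.1 _ _ (hLG.covBy_of_mem_joinSet ha (hnle w hwQ) hv)
  have hrk_z' := hLG.1 _ _ (hLG.covBy_of_mem_joinSet ha (hnle x' hx') hz')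
  have hx'w : x' = w := eq_of_le_of_not_lt (hw.1 (by simp)) fun hlt => by
    have := rk_strictMono hlt
    have := rk_strictMono.monotone hvz'
    omega
  exact hx'w ▸ hw.1 (by simp)

lemma IsMIdeal.rk_add_one_eq_prk [Fintype α] (hQ : IsMIdeal α Q)
    (hrk : prk {y // y ∈ Q} + 1 = prk α) {y : α} (hy : Maximal (· ∈ Q) y) :
    rk y + 1 = prk α := by
  suffices prk {y // y ∈ Q} = rk y by omega
  refine le_antisymm (Finset.sup_le fun q _ => ?_) ?_
  · rw [← rk_val (p := (· ∈ Q)) hQ.1]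
    obtain ⟨m, hqm, hm⟩ := Finite.exists_le_maximal (p := (· ∈ Q)) q.2
    exact (rk_strictMono.monotone hqm).trans (hQ.2.1 m y hm hy).le
  · have := Finset.le_sup (f := rk) (Finset.mem_univ (⟨y, hy.1⟩ : {y // y ∈ Q}))
    rwa [← rk_val (p := (· ∈ Q)) hQ.1] at this

lemma IsTMIdeal.exists_mem_joinSet_of_le [Fintype α] (hLG : IsLocallyGeometric α)
    (hQ : IsTMIdeal α Q) (hrk : prk {y // y ∈ Q} + 1 = prk α) (ha : a ∈ atoms α) (haQ : a ∉ Q)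
    {z : α} (haz : a ≤ z) : ∃ x ∈ Q, z ∈ joinSet {a, x} := by
  obtain ⟨x₀, hzx₀, hx₀⟩ := Finite.exists_le_maximal (p := fun _ => True) (a := z) trivial
  obtain ⟨hM, hunique⟩ := hQ
  have hnle : ∀ u ∈ Q, ¬a ≤ u := fun u hu h => haQ (hM.1 h hu)
  obtain ⟨y, hy, hyx₀, hmod⟩ := hM.2.2.2.2 x₀ (maximal_true.1 hx₀)
  let _ : Lattice {u // u ≤ x₀} := (hLG.2 x₀).1.toLattice
  let _ : OrderTop {u // u ≤ x₀} := { top := ⟨x₀, le_rfl⟩, le_top := fun u => u.2 }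
  set Y : {u // u ≤ x₀} := ⟨y, hyx₀⟩
  set Z : {u // u ≤ x₀} := ⟨z, hzx₀⟩
  have hxQ : ((Y ⊓ Z : {u // u ≤ x₀}) : α) ∈ Q := hM.1 (inf_le_left : Y ⊓ Z ≤ Y) hy.1
  obtain ⟨j, hj⟩ := (hunique _ hxQ a ha haQ).exists
  have hjz : j ≤ z := le_of_mem_joinSet_of_unique (hunique _ hxQ a ha haQ) hj
    (mem_upperBounds_pair.2 ⟨haz, (inf_le_right : Y ⊓ Z ≤ Z)⟩)
  have hyc : IsCoatom Y := by
    rw [← covBy_top_iff, ← val_covBy_val_iff (isLowerSet_Iic x₀)]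
    show y ⋖ x₀
    refine covBy_of_rk_le (lt_of_le_of_ne hyx₀ fun hyx₀ => ?_) ?_
    · exact hnle y hy.1 (haz.trans (hzx₀.trans hyx₀.ge))
    · have hy_rk := hM.rk_add_one_eq_prk hrk hy
      have hx₀_rk : rk x₀ ≤ prk α := Finset.le_sup (Finset.mem_univ _)
      omega
  have hJZ : (⟨j, hjz.trans hzx₀⟩ : {u // u ≤ x₀}) = Z :=
    (hLG.2 x₀).eq_of_isModular_of_isCoatom hmod hyc hjz (hj.1 (by simp))
      fun h => hnle y hy.1 ((hj.1 (by simp)).trans h)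
  refine ⟨_, hxQ, ?_⟩
  have hjz' : j = z := congrArg Subtype.val hJZ
  rw [← hjz']
  exact hj

end LocallyGeometric

/-- If `Q` is a TM-ideal of a locally geometric poset `P` with
`rk(Q) = rk(P) − 1`, then for any atom `a ∈ A(P) \ A(Q)` the map `x ↦ x ∨ a`
is a poset isomorphism `Q ≃ P_{≥ a}`. -/
theorem tmIdeal_orderIso_upper (α : Type) [PartialOrder α] [Fintype α]
    (hLG : IsLocallyGeometric α) (Q : Set α) (hQ : IsTMIdeal α Q)
    (hrk : prk {y : α // y ∈ Q} + 1 = prk α)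
    (a : α) (ha : a ∈ atoms α) (haQ : a ∉ Q) :
    ∃ f : {y : α // y ∈ Q} ≃o {y : α // a ≤ y},
      ∀ x : {y : α // y ∈ Q}, (f x : α) ∈ joinSet {(x : α), a} := by
  choose j hj using fun x : {y // y ∈ Q} => hQ.2 x x.2 a ha haQ
  have haj : ∀ x, a ≤ j x := fun x => (hj x).1.1 (by simp)
  have hmap_le : ∀ x x', j x ≤ j x' ↔ x ≤ x' := fun x x' =>
    ⟨hQ.le_of_joinSet_le hLG ha haQ x.2 x'.2 (hj x).1 (hj x').1,
      fun h => le_of_mem_joinSet_of_unique (hQ.2 x x.2 a ha haQ) (hj x).1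
        (mem_upperBounds_pair.2 ⟨haj x', (Subtype.coe_le_coe.2 h).trans ((hj x').1.1 (by simp))⟩)⟩
  let f := OrderEmbedding.ofMapLEIff (fun x => (⟨j x, haj x⟩ : {y // a ≤ y})) hmap_le
  have hf : Function.Surjective f := fun ⟨z, haz⟩ => by
    obtain ⟨x, hxQ, hx⟩ := hQ.exists_mem_joinSet_of_le hLG hrk ha haQ haz
    exact ⟨⟨x, hxQ⟩, Subtype.ext ((hj _).2 z hx).symm⟩
  exact ⟨OrderIso.ofSurjective f hf, fun x => Set.pair_comm a (x : α) ▸ (hj x).1⟩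

end PosetArr
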